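/- arXiv:1901.06807 — 4 statements merged into one kernel-verified Lean document; each statement's English description precedes it below -/
import Mathlib

section
/- Let X and Y be positive definite n×n complex matrices and let p > 1 be real. Then Tr(X^p Y^{1-p}) ≥ p·Tr(X) + (1-p)·Tr(Y) (the reverse tracial Young inequality). -/
open Matrix ComplexOrder

variable {n : ℕ}

/-- Apply a real function to a matrix via the spectral decomposition (functional calculus).
Returns `0` if the matrix is not Hermitian. -/
noncomputable def matFun (f : ℝ → ℝ) (A : Matrix (Fin n) (Fin n) ℂ) :
    Matrix (Fin n) (Fin n) ℂ :=
  if hA : A.IsHermitian then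
    (hA.eigenvectorUnitary : Matrix (Fin n) (Fin n) ℂ) *
      Matrix.diagonal (fun i => (f (hA.eigenvalues i) : ℂ)) *
      (star hA.eigenvectorUnitary : Matrix (Fin n) (Fin n) ℂ)
  else 0

/-- Matrix power `A^r` by functional calculus. -/
noncomputable def mpow (A : Matrix (Fin n) (Fin n) ℂ) (r : ℝ) : Matrix (Fin n) (Fin n) ℂ :=
  matFun (fun t => t ^ r) A

/-- Deformed matrix logarithm `log_q`. -/
noncomputable def mlogq (q : ℝ) (A : Matrix (Fin n) (Fin n) ℂ) : Matrix (Fin n) (Fin n) ℂ :=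
  matFun (fun t => if q = 1 then Real.log t else (t ^ (q - 1) - 1) / (q - 1)) A

/-- Deformed matrix exponential `exp_q`. -/
noncomputable def mexpq (q : ℝ) (M : Matrix (Fin n) (Fin n) ℂ) : Matrix (Fin n) (Fin n) ℂ :=
  matFun (fun s => if q = 1 then Real.exp s else ((q - 1) * s + 1) ^ (1 / (q - 1))) M

/-- Real part of the trace. -/
noncomputable def rtr (A : Matrix (Fin n) (Fin n) ℂ) : ℝ := (Matrix.trace A).re

/-- Scalar deformed logarithm. -/
noncomputable def dlog (q t : ℝ) : ℝ := if q = 1 then Real.log t else (t ^ (q - 1) - 1) / (q - 1)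

/-!
Diagonalise `X = ∑ aᵢ uᵢuᵢ*` and `Y = ∑ bⱼ vⱼvⱼ*`. Then
`Tr (X^p Y^(1-p)) = ∑ᵢⱼ aᵢ^p bⱼ^(1-p) |⟨uᵢ, vⱼ⟩|²`, and since both eigenbases are orthonormal the
weights `|⟨uᵢ, vⱼ⟩|²` form a doubly stochastic matrix, so that also
`p Tr X + (1-p) Tr Y = ∑ᵢⱼ (p aᵢ + (1-p) bⱼ) |⟨uᵢ, vⱼ⟩|²`. The inequality then holds term by term
by the scalar reverse Young inequality `p a + (1-p) b ≤ a^p b^(1-p)`, which is Bernoulli's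
inequality for `(a/b)^p`.
-/

theorem Real.mul_add_one_sub_mul_le_rpow_mul_rpow {a b p : ℝ} (ha : 0 ≤ a) (hb : 0 < b)
    (hp : 1 ≤ p) : p * a + (1 - p) * b ≤ a ^ p * b ^ (1 - p) := by
  have bernoulli : 1 + p * (a / b - 1) ≤ (a / b) ^ p := by
    simpa using
      one_add_mul_self_le_rpow_one_add (s := a / b - 1) (by linarith [div_nonneg ha hb.le]) hp
  calc p * a + (1 - p) * b = b * (1 + p * (a / b - 1)) := by field_simp; ring
    _ ≤ b * (a / b) ^ p := by gcongr
    _ = a ^ p * b ^ (1 - p) := by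
      rw [Real.div_rpow ha hb.le, Real.rpow_sub hb, Real.rpow_one]
      field_simp

namespace Matrix

variable {ι : Type*} [Fintype ι] [DecidableEq ι]

theorem sum_sum_add_mul_of_mem_doublyStochastic {R : Type*} [CommSemiring R] [PartialOrder R]
    [IsOrderedRing R] {M : Matrix ι ι R} (hM : M ∈ doublyStochastic R ι) (x y : ι → R) :
    ∑ i, ∑ j, (x i + y j) * M i j = ∑ i, x i + ∑ j, y j := by
  calc ∑ i, ∑ j, (x i + y j) * M i j
      = ∑ i, x i * ∑ j, M i j + ∑ j, y j * ∑ i, M i j := by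
        simp only [add_mul, Finset.sum_add_distrib, Finset.mul_sum]
        rw [Finset.sum_comm (f := fun i j => y j * M i j)]
    _ = ∑ i, x i + ∑ j, y j := by
        simp only [sum_row_of_mem_doublyStochastic hM, sum_col_of_mem_doublyStochastic hM, mul_one]

theorem normSq_mem_doublyStochastic {W : Matrix ι ι ℂ} (hW : W ∈ unitaryGroup ι ℂ) :
    of (fun i j => Complex.normSq (W i j)) ∈ doublyStochastic ℝ ι := by
  have diag_one {M N : Matrix ι ι ℂ} (h : M * N = 1) (i : ι) : ∑ j, M i j * N j i = 1 := by
    simpa [mul_apply] using congrFun (congrFun h i) i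
  refine mem_doublyStochastic_iff_sum.mpr ⟨fun i j => Complex.normSq_nonneg _, fun i => ?_,
    fun j => ?_⟩
  · have := diag_one (mem_unitaryGroup_iff.mp hW) i
    simp only [star_apply, RCLike.star_def, Complex.mul_conj] at this
    exact_mod_cast this
  · have := diag_one (mem_unitaryGroup_iff'.mp hW) j
    simp only [star_apply, RCLike.star_def, mul_comm (starRingEnd ℂ _), Complex.mul_conj] at this
    exact_mod_cast this

theorem trace_diagonal_mul_diagonal_mul_star (W : Matrix ι ι ℂ) (d e : ι → ℂ) :
    trace (diagonal d * W * diagonal e * star W) =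
      ∑ i, ∑ j, d i * e j * Complex.normSq (W i j) := by
  refine Finset.sum_congr rfl fun i _ => ?_
  simp only [diag, mul_apply (M := diagonal d * W * diagonal e), mul_diagonal, diagonal_mul,
    star_apply, RCLike.star_def, Complex.normSq_eq_conj_mul_self]
  exact Finset.sum_congr rfl fun j _ => by ring

theorem trace_conj_diagonal_mul_conj_diagonal (U V : Matrix ι ι ℂ) (d e : ι → ℂ) :
    trace (U * diagonal d * star U * (V * diagonal e * star V)) =
      ∑ i, ∑ j, d i * e j * Complex.normSq ((star U * V) i j) := by
  rw [← trace_diagonal_mul_diagonal_mul_star, star_mul, star_star,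
    show U * diagonal d * star U * (V * diagonal e * star V) =
      U * (diagonal d * star U * V * diagonal e * star V) by simp only [Matrix.mul_assoc],
    trace_mul_comm]
  simp only [Matrix.mul_assoc]

namespace IsHermitian

variable {A B : Matrix ι ι ℂ}

noncomputable def eigenvectorOverlap (hA : A.IsHermitian) (hB : B.IsHermitian) :
    Matrix ι ι ℝ :=
  of fun i j => Complex.normSq
    ((star (hA.eigenvectorUnitary : Matrix ι ι ℂ) * hB.eigenvectorUnitary) i j)

theorem eigenvectorOverlap_mem_doublyStochastic (hA : A.IsHermitian) (hB : B.IsHermitian) :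
    hA.eigenvectorOverlap hB ∈ doublyStochastic ℝ ι :=
  normSq_mem_doublyStochastic (star hA.eigenvectorUnitary * hB.eigenvectorUnitary).2

theorem re_trace_eq_sum_eigenvalues (hA : A.IsHermitian) :
    (trace A).re = ∑ i, hA.eigenvalues i := by
  simp [hA.trace_eq_sum_eigenvalues]

end IsHermitian

end Matrix

theorem Matrix.IsHermitian.rtr_matFun_mul_matFun {A B : Matrix (Fin n) (Fin n) ℂ}
    (hA : A.IsHermitian) (hB : B.IsHermitian) (f g : ℝ → ℝ) :
    rtr (matFun f A * matFun g B) =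
      ∑ i, ∑ j, f (hA.eigenvalues i) * g (hB.eigenvalues j) * hA.eigenvectorOverlap hB i j := by
  rw [rtr, matFun, matFun, dif_pos hA, dif_pos hB, trace_conj_diagonal_mul_conj_diagonal]
  simp_rw [← Complex.ofReal_mul, ← Complex.ofReal_sum, Complex.ofReal_re]
  rfl

theorem reverse_tracial_young_gt_one {n : ℕ} (X Y : Matrix (Fin n) (Fin n) ℂ)
    (hX : X.PosDef) (hY : Y.PosDef) (p : ℝ) (hp : 1 < p) :
    p * rtr X + (1 - p) * rtr Y ≤ rtr (mpow X p * mpow Y (1 - p)) := by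
  set a := hX.isHermitian.eigenvalues
  set b := hY.isHermitian.eigenvalues
  set w := hX.isHermitian.eigenvectorOverlap hY.isHermitian
  have hw : w ∈ doublyStochastic ℝ (Fin n) :=
    hX.isHermitian.eigenvectorOverlap_mem_doublyStochastic hY.isHermitian
  calc p * rtr X + (1 - p) * rtr Y = ∑ i, ∑ j, (p * a i + (1 - p) * b j) * w i j := by
        rw [sum_sum_add_mul_of_mem_doublyStochastic hw, rtr, rtr,
          hX.isHermitian.re_trace_eq_sum_eigenvalues, hY.isHermitian.re_trace_eq_sum_eigenvalues,
          Finset.mul_sum, Finset.mul_sum]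
    _ ≤ ∑ i, ∑ j, a i ^ p * b j ^ (1 - p) * w i j := by
        gcongr with i _ j _
        · exact nonneg_of_mem_doublyStochastic hw
        · exact Real.mul_add_one_sub_mul_le_rpow_mul_rpow (hX.eigenvalues_pos i).le
            (hY.eigenvalues_pos j) hp.le
    _ = rtr (mpow X p * mpow Y (1 - p)) :=
        (hX.isHermitian.rtr_matFun_mul_matFun hY.isHermitian (· ^ p) (· ^ (1 - p))).symm
end

section
/- Let X and Y be positive definite n×n complex matrices and let 0 < s < 1 be real. Then Tr(X^s) ≤ s·Tr(XY) + (1-s)·Tr(Y^{-s/(1-s)}). -/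
open Matrix ComplexOrder

variable {n : ℕ}

/-!
Diagonalise `X = U diag(λ) U*` and `Y = V diag(μ) V*`. The matrix `P i j = |(U* V) i j|²` is
doubly stochastic, `Tr(XY) = ∑ i j, P i j λᵢ μⱼ`, and `Tr X^s = ∑ i j, P i j λᵢ^s`,
`Tr Y^r = ∑ i j, P i j μⱼ^r`. So the trace inequality is the scalar Young inequality
`λ^s ≤ s λ μ + (1 - s) μ^(-s/(1-s))` (weighted AM–GM) averaged against `P`.
-/

theorem Real.rpow_le_young {a b s : ℝ} (ha : 0 ≤ a) (hb : 0 < b) (hs0 : 0 < s) (hs1 : s < 1) :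
    a ^ s ≤ s * (a * b) + (1 - s) * b ^ (-s / (1 - s)) := by
  have h1s : 0 < 1 - s := by linarith
  have hprod : (a * b) ^ s * (b ^ (-s / (1 - s))) ^ (1 - s) = a ^ s := by
    rw [Real.mul_rpow ha hb.le, ← Real.rpow_mul hb.le, div_mul_cancel₀ _ h1s.ne', mul_assoc,
      ← Real.rpow_add hb, add_neg_cancel, Real.rpow_zero, mul_one]
  have hamgm := Real.geom_mean_le_arith_mean2_weighted hs0.le h1s.le (mul_nonneg ha hb.le)
    (Real.rpow_nonneg hb.le (-s / (1 - s))) (add_sub_cancel s 1)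
  rwa [hprod] at hamgm

namespace Matrix

variable {ι 𝕜 : Type*} [Fintype ι] [DecidableEq ι] [RCLike 𝕜]

theorem sum_norm_sq_row_of_mem_unitaryGroup {U : Matrix ι ι 𝕜} (hU : U ∈ unitaryGroup ι 𝕜)
    (i : ι) : ∑ j, ‖U i j‖ ^ 2 = 1 := by
  have hii : (U * Uᴴ) i i = 1 := by
    rw [show U * Uᴴ = 1 from Unitary.mul_star_self_of_mem hU, one_apply_eq]
  simp only [mul_apply, conjTranspose_apply, ← starRingEnd_apply, RCLike.mul_conj] at hii
  exact_mod_cast hii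

theorem sum_norm_sq_col_of_mem_unitaryGroup {U : Matrix ι ι 𝕜} (hU : U ∈ unitaryGroup ι 𝕜)
    (j : ι) : ∑ i, ‖U i j‖ ^ 2 = 1 := by
  simpa using sum_norm_sq_row_of_mem_unitaryGroup (Unitary.star_mem hU) j

theorem sum_le_sum_sum_add_sum_of_mem_doublyStochastic {R : Type*} [Semiring R] [PartialOrder R]
    [IsOrderedRing R] {P : Matrix ι ι R} (hP : P ∈ doublyStochastic R ι) {f g : ι → R}
    {h : ι → ι → R} (hfg : ∀ i j, f i ≤ h i j + g j) :
    ∑ i, f i ≤ ∑ i, ∑ j, P i j * h i j + ∑ j, g j := calc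
  ∑ i, f i = ∑ i, ∑ j, P i j * f i := by
    simp only [← Finset.sum_mul, sum_row_of_mem_doublyStochastic hP, one_mul]
  _ ≤ ∑ i, ∑ j, P i j * (h i j + g j) := by
    refine Finset.sum_le_sum fun i _ => Finset.sum_le_sum fun j _ => ?_
    exact mul_le_mul_of_nonneg_left (hfg i j) (nonneg_of_mem_doublyStochastic hP)
  _ = ∑ i, ∑ j, P i j * h i j + ∑ j, g j := by
    simp only [mul_add, Finset.sum_add_distrib]
    congr 1
    rw [Finset.sum_comm]
    simp only [← Finset.sum_mul, sum_col_of_mem_doublyStochastic hP, one_mul]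

theorem norm_sq_mem_doublyStochastic_of_mem_unitaryGroup {U : Matrix ι ι 𝕜}
    (hU : U ∈ unitaryGroup ι 𝕜) : of (fun i j => ‖U i j‖ ^ 2) ∈ doublyStochastic ℝ ι :=
  mem_doublyStochastic_iff_sum.mpr ⟨fun _ _ => sq_nonneg _,
    sum_norm_sq_row_of_mem_unitaryGroup hU, sum_norm_sq_col_of_mem_unitaryGroup hU⟩

theorem trace_diagonal_mul_mul_diagonal_mul_star (d e : ι → 𝕜) (W : Matrix ι ι 𝕜) :
    trace (diagonal d * W * diagonal e * star W) = ∑ i, ∑ j, d i * e j * (‖W i j‖ : 𝕜) ^ 2 := by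
  simp only [trace, diag_apply, mul_apply, diagonal_apply, star_apply, ite_mul, zero_mul,
    mul_ite, mul_zero, Finset.sum_ite_eq, Finset.sum_ite_eq', Finset.mem_univ, if_true]
  refine Finset.sum_congr rfl fun i _ => Finset.sum_congr rfl fun j _ => ?_
  rw [← RCLike.mul_conj, starRingEnd_apply]
  ring

theorem IsHermitian.re_trace_mul {A B : Matrix ι ι 𝕜} (hA : A.IsHermitian) (hB : B.IsHermitian) :
    RCLike.re (trace (A * B)) = ∑ i, ∑ j, hA.eigenvalues i * hB.eigenvalues j *
      ‖(star (hA.eigenvectorUnitary : Matrix ι ι 𝕜) * hB.eigenvectorUnitary) i j‖ ^ 2 := by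
  set U : Matrix ι ι 𝕜 := (hA.eigenvectorUnitary : Matrix ι ι 𝕜)
  set V : Matrix ι ι 𝕜 := (hB.eigenvectorUnitary : Matrix ι ι 𝕜)
  have hconj : trace (A * B) = trace (diagonal (RCLike.ofReal ∘ hA.eigenvalues) * (star U * V) *
      diagonal (RCLike.ofReal ∘ hB.eigenvalues) * star (star U * V)) := by
    conv_lhs => rw [hA.spectral_theorem, hB.spectral_theorem]
    simp only [Unitary.conjStarAlgAut_apply, star_mul, star_star, Matrix.mul_assoc]
    rw [trace_mul_comm U]
    simp only [Matrix.mul_assoc]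
    rfl
  rw [hconj, trace_diagonal_mul_mul_diagonal_mul_star]
  simp only [map_sum, Function.comp_apply]
  norm_cast

end Matrix

theorem rtr_matFun (f : ℝ → ℝ) {A : Matrix (Fin n) (Fin n) ℂ} (hA : A.IsHermitian) :
    rtr (matFun f A) = ∑ i, f (hA.eigenvalues i) := by
  rw [rtr, matFun, dif_pos hA, trace_mul_cycle, Unitary.coe_star_mul_self, Matrix.one_mul,
    trace_diagonal]
  simp

theorem tracial_young_aux {n : ℕ} (X Y : Matrix (Fin n) (Fin n) ℂ)
    (hX : X.PosDef) (hY : Y.PosDef) (s : ℝ) (hs0 : 0 < s) (hs1 : s < 1) :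
    rtr (mpow X s) ≤ s * rtr (X * Y) + (1 - s) * rtr (mpow Y (-s / (1 - s))) := by
  set W : Matrix (Fin n) (Fin n) ℂ :=
    star (hX.isHermitian.eigenvectorUnitary : Matrix (Fin n) (Fin n) ℂ) *
      hY.isHermitian.eigenvectorUnitary
  have hW : W ∈ unitaryGroup (Fin n) ℂ :=
    mul_mem (Unitary.star_mem (SetLike.coe_mem _)) (SetLike.coe_mem _)
  have hXY := hX.isHermitian.re_trace_mul hY.isHermitian
  rw [RCLike.re_to_complex] at hXY
  rw [mpow, mpow, rtr_matFun _ hX.isHermitian, rtr_matFun _ hY.isHermitian, rtr, hXY,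
    Finset.mul_sum, Finset.mul_sum]
  have hyoung : ∀ i j, hX.isHermitian.eigenvalues i ^ s ≤
      s * (hX.isHermitian.eigenvalues i * hY.isHermitian.eigenvalues j) +
        (1 - s) * hY.isHermitian.eigenvalues j ^ (-s / (1 - s)) := fun i j =>
    Real.rpow_le_young (hX.eigenvalues_pos i).le (hY.eigenvalues_pos j) hs0 hs1
  refine (sum_le_sum_sum_add_sum_of_mem_doublyStochastic
    (norm_sq_mem_doublyStochastic_of_mem_unitaryGroup hW) hyoung).trans_eq ?_
  simp only [Finset.mul_sum, of_apply]
  congr 1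
  refine Finset.sum_congr rfl fun i _ => Finset.sum_congr rfl fun j _ => ?_
  ring
end

section
/- Let 1 ≤ q ≤ 2 and let X, A be positive definite n×n matrices. Then the Tsallis relative entropy D_{2-q}(X|A) = Tr(X^{2-q}(log_q X - log_q A)) equals the supremum over self-adjoint matrices L satisfying L + log_q A > -1/(q-1)·I of Tr(X) + Tr(X^{2-q} L) - Tr(exp_q(L + log_q A)), with the supremum attained at L = log_q X - log_q A. -/
/-!
Diagonalise `X = ∑ λᵢ Pᵢ` and `K = L + log_q A = ∑ κⱼ Qⱼ`. For any functions `f`, `g`,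
`Tr (f X · g K) = ∑ᵢⱼ wᵢⱼ f(λᵢ) g(κⱼ)` with weights `wᵢⱼ = Tr (Pᵢ Qⱼ) ≥ 0`, so the matrix
inequality reduces to the scalar one `λ + λ^(2-q) log_q μ - μ ≤ λ^(2-q) log_q λ` for
`μ = exp_q κ > 0`. For `q = 1` this is `log x ≤ x - 1`, for `1 < q ≤ 2` it is the weighted
AM-GM inequality `λ^(2-q) μ^(q-1) ≤ (2-q) λ + (q-1) μ`. Equality holds at `L = log_q X - log_q A`
because `exp_q ∘ log_q = id` on the positive spectrum of `X`.
-/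

open Matrix ComplexOrder

variable {n : ℕ}

noncomputable def dexp (q s : ℝ) : ℝ :=
  if q = 1 then Real.exp s else ((q - 1) * s + 1) ^ (1 / (q - 1))

lemma sub_one_mul_dlog_add_one (q t : ℝ) : (q - 1) * dlog q t + 1 = t ^ (q - 1) := by
  rcases eq_or_ne q 1 with rfl | hq
  · simp
  · rw [dlog, if_neg hq, mul_div_cancel₀ _ (sub_ne_zero.mpr hq), sub_add_cancel]

lemma dexp_pos {q s : ℝ} (hs : 0 < (q - 1) * s + 1) : 0 < dexp q s := by
  unfold dexp
  split_ifs
  exacts [Real.exp_pos s, Real.rpow_pos_of_pos hs _]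

lemma dexp_dlog {q t : ℝ} (ht : 0 < t) : dexp q (dlog q t) = t := by
  rcases eq_or_ne q 1 with rfl | hq
  · simp [dexp, dlog, Real.exp_log ht]
  · rw [dexp, if_neg hq, sub_one_mul_dlog_add_one, one_div,
      Real.rpow_rpow_inv ht.le (sub_ne_zero.mpr hq)]

lemma dlog_dexp {q s : ℝ} (hs : 0 < (q - 1) * s + 1) : dlog q (dexp q s) = s := by
  rcases eq_or_ne q 1 with rfl | hq
  · simp [dexp, dlog]
  · rw [dlog, if_neg hq, dexp, if_neg hq, one_div, Real.rpow_inv_rpow hs.le (sub_ne_zero.mpr hq)]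
    field_simp
    ring

lemma add_rpow_mul_dlog_sub_le {q t u : ℝ} (hq1 : 1 ≤ q) (hq2 : q ≤ 2) (ht : 0 < t)
    (hu : 0 < u) : t + t ^ (2 - q) * dlog q u - u ≤ t ^ (2 - q) * dlog q t := by
  rcases hq1.eq_or_lt with rfl | hq1
  · have h := Real.add_one_le_exp (Real.log u - Real.log t)
    rw [Real.exp_sub, Real.exp_log hu, Real.exp_log ht, le_div_iff₀ ht] at h
    norm_num [dlog]
    nlinarith
  · have amgm : t ^ (2 - q) * u ^ (q - 1) ≤ (2 - q) * t + (q - 1) * u :=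
      Real.geom_mean_le_arith_mean2_weighted (by linarith) (by linarith) ht.le hu.le (by ring)
    have htt : t ^ (2 - q) * t ^ (q - 1) = t := by rw [← Real.rpow_add ht]; norm_num
    simp only [dlog, if_neg hq1.ne']
    rw [← mul_le_mul_iff_right₀ (sub_pos.mpr hq1)]
    field_simp
    nlinarith

section Hermitian

variable {m 𝕜 : Type*} [Fintype m] [DecidableEq m] [RCLike 𝕜]

@[fun_prop]
lemma Matrix.continuousOn_spectrum (f : ℝ → ℝ) (A : Matrix m m 𝕜) :
    ContinuousOn f (spectrum ℝ A) :=
  finite_real_spectrum.continuousOn f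

lemma trace_diagonal_mul_mul_diagonal_mul_conjTranspose (d e : m → ℝ) (W : Matrix m m 𝕜) :
    trace (diagonal (RCLike.ofReal ∘ d) * W * diagonal (RCLike.ofReal ∘ e) * Wᴴ) =
      ((∑ i, ∑ j, ‖W i j‖ ^ 2 * (d i * e j) : ℝ) : 𝕜) := by
  simp only [trace, diag_apply, mul_apply (M := diagonal _ * W * diagonal _), mul_diagonal,
    diagonal_mul, conjTranspose_apply, RCLike.star_def, RCLike.ofReal_sum, RCLike.ofReal_mul,
    RCLike.ofReal_pow, ← RCLike.mul_conj, Function.comp_apply]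
  refine Finset.sum_congr rfl fun i _ => Finset.sum_congr rfl fun j _ => ?_
  ring

lemma exists_trace_cfc_mul_cfc_eq_sum {A B : Matrix m m 𝕜} (hA : A.IsHermitian)
    (hB : B.IsHermitian) : ∃ w : m → m → ℝ, (∀ i j, 0 ≤ w i j) ∧ ∀ f g : ℝ → ℝ,
      trace (cfc f A * cfc g B) =
        ((∑ i, ∑ j, w i j * (f (hA.eigenvalues i) * g (hB.eigenvalues j)) : ℝ) : 𝕜) := by
  let U : Matrix m m 𝕜 := hA.eigenvectorUnitary
  let V : Matrix m m 𝕜 := hB.eigenvectorUnitary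
  refine ⟨fun i j => ‖(Uᴴ * V) i j‖ ^ 2, fun _ _ => by positivity, fun f g => ?_⟩
  rw [← trace_diagonal_mul_mul_diagonal_mul_conjTranspose, hA.cfc_eq, hB.cfc_eq,
    IsHermitian.cfc, IsHermitian.cfc, Unitary.conjStarAlgAut_apply, Unitary.conjStarAlgAut_apply,
    conjTranspose_mul, conjTranspose_conjTranspose]
  simp only [star_eq_conjTranspose, mul_assoc]
  rw [trace_mul_comm]
  simp only [mul_assoc]
  rfl

open scoped MatrixOrder in
lemma posDef_smul_cfc_add_one_iff {A : Matrix m m 𝕜} (hA : A.IsHermitian) (c : ℝ)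
    (f : ℝ → ℝ) : (c • cfc f A + 1).PosDef ↔ ∀ x ∈ spectrum ℝ A, 0 < c * f x + 1 := by
  rw [← cfc_const_mul c f A, ← map_one (algebraMap ℝ (Matrix m m 𝕜)),
    ← cfc_add_const 1 (fun x => c * f x) A (by fun_prop) hA.isSelfAdjoint,
    ← isStrictlyPositive_iff_posDef,
    cfc_isStrictlyPositive_iff (fun x => c * f x + 1) A (by fun_prop) hA.isSelfAdjoint]

lemma Matrix.PosDef.pos_of_mem_spectrum {A : Matrix m m 𝕜} (hA : A.PosDef) {x : ℝ}
    (hx : x ∈ spectrum ℝ A) : 0 < x := by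
  rw [hA.isHermitian.spectrum_real_eq_range_eigenvalues] at hx
  obtain ⟨i, rfl⟩ := hx
  exact hA.eigenvalues_pos i

end Hermitian

section FunctionalCalculus

variable {q : ℝ} {A : Matrix (Fin n) (Fin n) ℂ}

lemma matFun_eq_cfc (hA : A.IsHermitian) (f : ℝ → ℝ) : matFun f A = cfc f A := by
  rw [matFun, dif_pos hA, hA.cfc_eq]
  rfl

lemma isHermitian_matFun (f : ℝ → ℝ) (A : Matrix (Fin n) (Fin n) ℂ) :
    (matFun f A).IsHermitian := by
  by_cases hA : A.IsHermitian
  · rw [matFun_eq_cfc hA]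
    exact cfc_predicate f A
  · rw [matFun, dif_neg hA]
    exact isHermitian_zero

lemma mpow_eq_cfc (hA : A.IsHermitian) (r : ℝ) : mpow A r = cfc (fun t : ℝ => t ^ r) A :=
  matFun_eq_cfc hA _

lemma mlogq_eq_cfc (hA : A.IsHermitian) : mlogq q A = cfc (dlog q) A :=
  matFun_eq_cfc hA _

lemma mexpq_eq_cfc (hA : A.IsHermitian) : mexpq q A = cfc (dexp q) A :=
  matFun_eq_cfc hA _

lemma mexpq_mlogq (hA : A.PosDef) : mexpq q (mlogq q A) = A := by
  have hAs : IsSelfAdjoint A := hA.isHermitian.isSelfAdjoint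
  rw [mlogq_eq_cfc hA.isHermitian, mexpq_eq_cfc (cfc_predicate (dlog q) A).isHermitian,
    ← cfc_comp' (dexp q) (dlog q) A ((finite_real_spectrum.image _).continuousOn _)]
  conv_rhs => rw [← cfc_id ℝ A]
  exact cfc_congr fun x hx => dexp_dlog (hA.pos_of_mem_spectrum hx)

lemma posDef_smul_mlogq_add_one (hA : A.PosDef) : ((q - 1) • mlogq q A + 1).PosDef := by
  rw [mlogq_eq_cfc hA.isHermitian, posDef_smul_cfc_add_one_iff hA.isHermitian]
  intro x hx
  rw [sub_one_mul_dlog_add_one]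
  exact Real.rpow_pos_of_pos (hA.pos_of_mem_spectrum hx) _

end FunctionalCalculus

lemma rtr_add (M N : Matrix (Fin n) (Fin n) ℂ) : rtr (M + N) = rtr M + rtr N := by
  simp [rtr, trace_add]

lemma rtr_add_mpow_mul_sub_mexpq_le {q : ℝ} (hq1 : 1 ≤ q) (hq2 : q ≤ 2)
    {X K : Matrix (Fin n) (Fin n) ℂ} (hX : X.PosDef) (hK : K.IsHermitian)
    (hK1 : ((q - 1) • K + 1).PosDef) :
    rtr X + rtr (mpow X (2 - q) * K) - rtr (mexpq q K) ≤ rtr (mpow X (2 - q) * mlogq q X) := by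
  have hXh := hX.isHermitian
  obtain ⟨w, hw, htrace⟩ := exists_trace_cfc_mul_cfc_eq_sum hXh hK
  set t := hXh.eigenvalues
  set κ := hK.eigenvalues
  have expand (f g : ℝ → ℝ) :
      rtr (cfc f X * cfc g K) = ∑ i, ∑ j, w i j * (f (t i) * g (κ j)) := by
    rw [rtr, htrace]
    exact RCLike.ofReal_re (K := ℂ) _
  have hκ (j) : 0 < (q - 1) * κ j + 1 := by
    rw [← cfc_id ℝ K, posDef_smul_cfc_add_one_iff hK] at hK1
    exact hK1 _ (hK.eigenvalues_mem_spectrum_real j)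
  have hX_eq : rtr X = rtr (cfc (id : ℝ → ℝ) X * cfc (1 : ℝ → ℝ) K) := by
    rw [cfc_id ℝ X, cfc_one ℝ K, mul_one]
  have hXK_eq : mpow X (2 - q) * K = cfc (fun t : ℝ => t ^ (2 - q)) X * cfc (id : ℝ → ℝ) K := by
    rw [mpow_eq_cfc hXh, cfc_id ℝ K]
  have hexp_eq : mexpq q K = cfc (1 : ℝ → ℝ) X * cfc (dexp q) K := by
    rw [cfc_one ℝ X, one_mul, mexpq_eq_cfc hK]
  have hlog_eq : mpow X (2 - q) * mlogq q X =
      cfc (fun s => s ^ (2 - q) * dlog q s) X * cfc (1 : ℝ → ℝ) K := by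
    rw [cfc_one ℝ K, mul_one, cfc_mul _ _ X, mpow_eq_cfc hXh, mlogq_eq_cfc hXh]
  calc rtr X + rtr (mpow X (2 - q) * K) - rtr (mexpq q K)
      = ∑ i, ∑ j, w i j * (t i + t i ^ (2 - q) * κ j - dexp q (κ j)) := by
        rw [hX_eq, hXK_eq, hexp_eq, expand, expand, expand]
        simp only [← Finset.sum_add_distrib, ← Finset.sum_sub_distrib, id, Pi.one_apply]
        refine Finset.sum_congr rfl fun i _ => Finset.sum_congr rfl fun j _ => ?_
        ring
    _ ≤ ∑ i, ∑ j, w i j * (t i ^ (2 - q) * dlog q (t i) * 1) := by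
        gcongr with i _ j _
        · exact hw i j
        rw [mul_one]
        have h := add_rpow_mul_dlog_sub_le hq1 hq2 (hX.eigenvalues_pos i) (dexp_pos (hκ j))
        rwa [dlog_dexp (hκ j)] at h
    _ = rtr (mpow X (2 - q) * mlogq q X) := by
        rw [hlog_eq, expand]
        rfl

theorem tsallis_relative_entropy_variational_general {n : ℕ} (q : ℝ)
    (hq1 : 1 ≤ q) (hq2 : q ≤ 2) (X A : Matrix (Fin n) (Fin n) ℂ)
    (hX : X.PosDef) :
    (∀ L : Matrix (Fin n) (Fin n) ℂ, L.IsHermitian →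
        ((q - 1) • (L + mlogq q A) + 1).PosDef →
      rtr X + rtr (mpow X (2 - q) * L) - rtr (mexpq q (L + mlogq q A)) ≤
        rtr (mpow X (2 - q) * (mlogq q X - mlogq q A))) ∧
    (mlogq q X - mlogq q A).IsHermitian ∧
    ((q - 1) • ((mlogq q X - mlogq q A) + mlogq q A) + 1).PosDef ∧
    rtr X + rtr (mpow X (2 - q) * (mlogq q X - mlogq q A)) -
        rtr (mexpq q ((mlogq q X - mlogq q A) + mlogq q A)) =
      rtr (mpow X (2 - q) * (mlogq q X - mlogq q A)) := by
  simp only [sub_add_cancel]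
  refine ⟨fun L hL hL1 => ?_, (isHermitian_matFun _ _).sub (isHermitian_matFun _ _),
    posDef_smul_mlogq_add_one hX, by rw [mexpq_mlogq hX]; ring⟩
  have key := rtr_add_mpow_mul_sub_mexpq_le hq1 hq2 (K := L + mlogq q A) hX
    (hL.add (isHermitian_matFun _ _)) hL1
  have split (P : Matrix (Fin n) (Fin n) ℂ) :
      rtr (mpow X (2 - q) * P) = rtr (mpow X (2 - q) * (P + mlogq q A)) -
        rtr (mpow X (2 - q) * mlogq q A) := by
    rw [mul_add, rtr_add, add_sub_cancel_right]
  rw [split L, split (mlogq q X - mlogq q A), sub_add_cancel]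
  linarith

theorem tsallis_relative_entropy_variational {n : ℕ} (q : ℝ)
    (hq1 : 1 ≤ q) (hq2 : q ≤ 2) (X A : Matrix (Fin n) (Fin n) ℂ)
    (hX : X.PosDef) (hA : A.PosDef) :
    (∀ L : Matrix (Fin n) (Fin n) ℂ, L.IsHermitian →
        ((q - 1) • (L + mlogq q A) + 1).PosDef →
      rtr X + rtr (mpow X (2 - q) * L) - rtr (mexpq q (L + mlogq q A)) ≤
        rtr (mpow X (2 - q) * (mlogq q X - mlogq q A))) ∧
    (mlogq q X - mlogq q A).IsHermitian ∧
    ((q - 1) • ((mlogq q X - mlogq q A) + mlogq q A) + 1).PosDef ∧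
    rtr X + rtr (mpow X (2 - q) * (mlogq q X - mlogq q A)) -
        rtr (mexpq q ((mlogq q X - mlogq q A) + mlogq q A)) =
      rtr (mpow X (2 - q) * (mlogq q X - mlogq q A)) :=
  tsallis_relative_entropy_variational_general q hq1 hq2 X A hX
end

section
/- Let 1 < q ≤ 2 and let A, B be self-adjoint n×n matrices such that both A and A+B are bounded below by -1/(q-1)·I. Then log_q(Tr exp_q(A+B)) - log_q(Tr exp_q(A)) ≥ (Tr exp_q A)^{q-2} · Tr((exp_q A)^{2-q} B) (a Peierls–Bogolyubov type inequality). -/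
/-!
Put `X = (q-1)A + 1` and `Y = (q-1)(A+B) + 1`. Then `E = exp_q A = X^{1/(q-1)}`,
`F = exp_q (A+B) = Y^{1/(q-1)}` and `(q-1)B = F^{q-1} - E^{q-1}`, so
`(q-1) Tr(E^{2-q} B) = Tr(E^{2-q} F^{q-1}) - Tr E`. With `E = U diag(e) U*` and `F = W diag(f) W*`,
`Tr(E^{2-q} F^{q-1}) = ∑ᵢⱼ eᵢ^{2-q} |(U*W)ᵢⱼ|² fⱼ^{q-1}`, and `(|(U*W)ᵢⱼ|²)` is doubly stochastic
because `U*W` is unitary. Concavity of `t ↦ t^{q-1}` followed by Hölder with exponents `1/(2-q)`,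
`1/(q-1)` gives the trace Hölder inequality `Tr(E^{2-q} F^{q-1}) ≤ (Tr E)^{2-q} (Tr F)^{q-1}`, and
the claim becomes the scalar inequality `S^{q-2}(S^{2-q}T^{q-1} - S)/(q-1) ≤ log_q T - log_q S`,
an equality when `S > 0`.
-/

open Matrix ComplexOrder

variable {n : ℕ}

section Scalar

variable {ι : Type*}

lemma sum_rpow_one_sub_mul_rpow_le (s : Finset ι) {f g : ι → ℝ} (hf : ∀ i ∈ s, 0 ≤ f i)
    (hg : ∀ i ∈ s, 0 ≤ g i) {t : ℝ} (ht0 : 0 ≤ t) (ht1 : t ≤ 1) :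
    ∑ i ∈ s, f i ^ (1 - t) * g i ^ t ≤ (∑ i ∈ s, f i) ^ (1 - t) * (∑ i ∈ s, g i) ^ t := by
  rcases ht0.eq_or_lt with rfl | ht0'
  · simp
  rcases ht1.eq_or_lt with rfl | ht1'
  · simp
  have hconj : (1 - t)⁻¹.HolderConjugate t⁻¹ :=
    Real.holderConjugate_iff.2 ⟨(one_lt_inv₀ (by linarith)).2 (by linarith), by simp⟩
  convert Real.inner_le_Lp_mul_Lq_of_nonneg s (f := fun i => f i ^ (1 - t)) (g := fun i => g i ^ t)
    hconj (fun i hi => Real.rpow_nonneg (hf i hi) _)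
    (fun i hi => Real.rpow_nonneg (hg i hi) _) using 3
  · exact (Finset.sum_congr rfl fun i hi => Real.rpow_rpow_inv (hf i hi) (by linarith)).symm
  · rw [one_div, inv_inv]
  · exact (Finset.sum_congr rfl fun i hi => Real.rpow_rpow_inv (hg i hi) ht0'.ne').symm
  · rw [one_div, inv_inv]

lemma rpow_mulVec_le_mulVec_rpow [Fintype ι] [DecidableEq ι] {M : Matrix ι ι ℝ}
    (hM : M ∈ doublyStochastic ℝ ι) {b : ι → ℝ} (hb : 0 ≤ b) {t : ℝ} (ht0 : 0 ≤ t) (ht1 : t ≤ 1)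
    (i : ι) :
    (M *ᵥ fun j => b j ^ t) i ≤ (M *ᵥ b) i ^ t := by
  simpa [mulVec, dotProduct] using (Real.concaveOn_rpow ht0 ht1).le_map_sum (t := Finset.univ)
    (fun j _ => nonneg_of_mem_doublyStochastic hM) (sum_row_of_mem_doublyStochastic hM i)
    (fun j _ => Set.mem_Ici.2 (hb j))

lemma dotProduct_rpow_mulVec_rpow_le [Fintype ι] [DecidableEq ι] {M : Matrix ι ι ℝ}
    (hM : M ∈ doublyStochastic ℝ ι) {a b : ι → ℝ} (ha : 0 ≤ a) (hb : 0 ≤ b) {t : ℝ}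
    (ht0 : 0 ≤ t) (ht1 : t ≤ 1) :
    (fun i => a i ^ (1 - t)) ⬝ᵥ (M *ᵥ fun j => b j ^ t) ≤ (∑ i, a i) ^ (1 - t) * (∑ j, b j) ^ t :=
  calc (fun i => a i ^ (1 - t)) ⬝ᵥ (M *ᵥ fun j => b j ^ t)
      ≤ ∑ i, a i ^ (1 - t) * (M *ᵥ b) i ^ t :=
        Finset.sum_le_sum fun i _ => mul_le_mul_of_nonneg_left
          (rpow_mulVec_le_mulVec_rpow hM hb ht0 ht1 i) (Real.rpow_nonneg (ha i) _)
    _ ≤ (∑ i, a i) ^ (1 - t) * (∑ i, (M *ᵥ b) i) ^ t :=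
        sum_rpow_one_sub_mul_rpow_le _ (fun i _ => ha i)
          (fun i _ => Finset.sum_nonneg fun j _ =>
            mul_nonneg (nonneg_of_mem_doublyStochastic hM) (hb j)) ht0 ht1
    _ = (∑ i, a i) ^ (1 - t) * (∑ j, b j) ^ t := by rw [sum_mulVec_of_mem_doublyStochastic hM]

end Scalar

section ConjDiag

variable {m : Type*} [Fintype m] [DecidableEq m]

noncomputable def conjDiag (U : unitaryGroup m ℂ) (d : m → ℝ) : Matrix m m ℂ :=
  (U : Matrix m m ℂ) * diagonal (fun i => (d i : ℂ)) * star (U : Matrix m m ℂ)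

lemma conjDiag_mul_conjDiag (U : unitaryGroup m ℂ) (d e : m → ℝ) :
    conjDiag U d * conjDiag U e = conjDiag U (d * e) := by
  simp only [conjDiag, mul_assoc, ← mul_assoc (star (U : Matrix m m ℂ)),
    UnitaryGroup.star_mul_self, one_mul]
  simp only [← mul_assoc, diagonal_mul_diagonal, Pi.mul_apply, Complex.ofReal_mul]

lemma conjDiag_mul_add (U : unitaryGroup m ℂ) (d : m → ℝ) (c e : ℝ) :
    conjDiag U (fun i => c * d i + e) = c • conjDiag U d + e • 1 := by
  have : diagonal (fun i => ((c * d i + e : ℝ) : ℂ)) =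
      c • diagonal (fun i => (d i : ℂ)) + e • 1 := by
    ext i j; rcases eq_or_ne i j with rfl | h <;> simp [*]
  rw [conjDiag, this, mul_add, add_mul, Matrix.mul_smul, Matrix.smul_mul, Matrix.mul_smul,
    Matrix.smul_mul, mul_one, Unitary.mul_star_self_of_mem U.2, conjDiag]

lemma isHermitian_conjDiag (U : unitaryGroup m ℂ) (d : m → ℝ) : (conjDiag U d).IsHermitian := by
  simpa [conjDiag, star_eq_conjTranspose] using
    isHermitian_mul_mul_conjTranspose (U : Matrix m m ℂ)
      (isHermitian_diagonal_of_self_adjoint _ (funext fun i => Complex.conj_ofReal (d i)))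

lemma Matrix.IsHermitian.eq_conjDiag {A : Matrix m m ℂ} (hA : A.IsHermitian) :
    A = conjDiag hA.eigenvectorUnitary hA.eigenvalues := by
  conv_lhs => rw [hA.spectral_theorem]
  rfl

lemma Matrix.PosSemidef.exists_eq_conjDiag_rpow {X : Matrix m m ℂ} (hX : X.PosSemidef) {r : ℝ}
    (hr : r ≠ 0) :
    ∃ (U : unitaryGroup m ℂ) (a : m → ℝ), 0 ≤ a ∧ X = conjDiag U (fun i => a i ^ r) := by
  refine ⟨hX.isHermitian.eigenvectorUnitary, fun i => hX.isHermitian.eigenvalues i ^ r⁻¹,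
    fun i => Real.rpow_nonneg (hX.eigenvalues_nonneg i) _, ?_⟩
  simp only [Real.rpow_inv_rpow (hX.eigenvalues_nonneg _) hr]
  exact hX.isHermitian.eq_conjDiag

lemma trace_conjDiag (U : unitaryGroup m ℂ) (d : m → ℝ) :
    (conjDiag U d).trace = ∑ i, (d i : ℂ) := by
  rw [conjDiag, trace_mul_cycle, UnitaryGroup.star_mul_self, one_mul, trace_diagonal]

lemma re_trace_conjDiag_mul_conjDiag (U W : unitaryGroup m ℂ) (a b : m → ℝ) :
    (conjDiag U a * conjDiag W b).trace.re =
      a ⬝ᵥ (star (U : Matrix m m ℂ) * W).map Complex.normSq *ᵥ b := by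
  set V := star (U : Matrix m m ℂ) * W
  have hconj : conjDiag U a * conjDiag W b =
      U * (diagonal (fun i => (a i : ℂ)) * (V * diagonal (fun j => (b j : ℂ)) * star V)) *
        star (U : Matrix m m ℂ) := by
    simp only [V, conjDiag, star_mul, star_star, mul_assoc, Unitary.mul_star_self_of_mem U.2,
      mul_one]
  have hdiag : ∀ i, (V * diagonal (fun j => (b j : ℂ)) * star V) i i =
      ∑ j, ((Complex.normSq (V i j) * b j : ℝ) : ℂ) := fun i => by
    rw [mul_apply]
    refine Finset.sum_congr rfl fun j _ => ?_
    rw [mul_diagonal, star_apply, Complex.star_def, mul_right_comm, Complex.mul_conj]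
    push_cast
    ring
  rw [hconj, trace_mul_cycle, UnitaryGroup.star_mul_self, one_mul, trace]
  simp only [diag, diagonal_mul, hdiag, ← Complex.ofReal_sum, ← Complex.ofReal_mul,
    Complex.ofReal_re]
  simp [dotProduct, mulVec, Finset.mul_sum]

lemma normSq_map_mem_doublyStochastic (V : unitaryGroup m ℂ) :
    (V : Matrix m m ℂ).map Complex.normSq ∈ doublyStochastic ℝ m := by
  refine mem_doublyStochastic_iff_sum.2
    ⟨fun i j => Complex.normSq_nonneg _, fun i => ?_, fun j => ?_⟩
  · have h := congr_fun₂ (mem_unitaryGroup_iff.mp V.2) i i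
    simp only [mul_apply, star_apply, one_apply_eq, Complex.star_def, Complex.mul_conj] at h
    exact_mod_cast h
  · have h := congr_fun₂ (UnitaryGroup.star_mul_self V) j j
    simp only [mul_apply, star_apply, one_apply_eq, Complex.star_def, mul_comm (starRingEnd ℂ _),
      Complex.mul_conj] at h
    exact_mod_cast h

lemma mul_diagonal_comp_eq_of_mul_diagonal_eq {X : Matrix m m ℂ} {d e : m → ℝ} (f : ℝ → ℝ)
    (h : X * diagonal (fun j => (d j : ℂ)) = diagonal (fun i => (e i : ℂ)) * X) :
    X * diagonal (fun j => (f (d j) : ℂ)) = diagonal (fun i => (f (e i) : ℂ)) * X := by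
  ext i j
  have hij := congr_fun₂ h i j
  simp only [mul_diagonal, diagonal_mul] at hij ⊢
  rcases eq_or_ne (X i j) 0 with hX | hX
  · simp [hX]
  · have hde : d j = e i := by
      apply Complex.ofReal_injective
      apply mul_left_cancel₀ hX
      rw [hij, mul_comm]
    rw [hde, mul_comm]

lemma conjDiag_comp_eq_of_eq {U V : unitaryGroup m ℂ} {d e : m → ℝ} (f : ℝ → ℝ)
    (h : conjDiag U d = conjDiag V e) :
    conjDiag U (fun i => f (d i)) = conjDiag V (fun i => f (e i)) := by
  set X := star (V : Matrix m m ℂ) * U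
  have hX : X * diagonal (fun j => (d j : ℂ)) = diagonal (fun i => (e i : ℂ)) * X := by
    calc X * diagonal (fun j => (d j : ℂ))
        = star (V : Matrix m m ℂ) * conjDiag U d * U := by
          simp only [X, conjDiag, mul_assoc, UnitaryGroup.star_mul_self, mul_one]
      _ = diagonal (fun i => (e i : ℂ)) * X := by
          rw [h]
          simp only [X, conjDiag, ← mul_assoc, UnitaryGroup.star_mul_self, one_mul]
  have hU : (U : Matrix m m ℂ) = V * X := by
    simp only [X, ← mul_assoc, Unitary.mul_star_self_of_mem V.2, one_mul]
  calc conjDiag U (fun i => f (d i))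
      = V * (X * diagonal (fun j => (f (d j) : ℂ))) * star X * star (V : Matrix m m ℂ) := by
        simp only [conjDiag, hU, star_mul, mul_assoc]
    _ = conjDiag V (fun i => f (e i)) := by
        rw [mul_diagonal_comp_eq_of_mul_diagonal_eq f hX]
        simp only [conjDiag, X, star_mul, star_star, mul_assoc, ← mul_assoc (U : Matrix m m ℂ),
          Unitary.mul_star_self_of_mem U.2, Unitary.mul_star_self_of_mem V.2, one_mul, mul_one]

lemma re_trace_conjDiag_rpow_mul_conjDiag_rpow_le (U W : unitaryGroup m ℂ) {a b : m → ℝ}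
    (ha : 0 ≤ a) (hb : 0 ≤ b) {t : ℝ} (ht0 : 0 ≤ t) (ht1 : t ≤ 1) :
    (conjDiag U (fun i => a i ^ (1 - t)) * conjDiag W (fun j => b j ^ t)).trace.re ≤
      (∑ i, a i) ^ (1 - t) * (∑ j, b j) ^ t := by
  rw [re_trace_conjDiag_mul_conjDiag]
  exact dotProduct_rpow_mulVec_rpow_le (normSq_map_mem_doublyStochastic (star U * W)) ha hb
    ht0 ht1

end ConjDiag

lemma matFun_conjDiag (f : ℝ → ℝ) (U : unitaryGroup (Fin n) ℂ) (d : Fin n → ℝ) :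
    matFun f (conjDiag U d) = conjDiag U (fun i => f (d i)) := by
  have hM := isHermitian_conjDiag U d
  rw [matFun, dif_pos hM]
  exact conjDiag_comp_eq_of_eq f hM.eq_conjDiag.symm

lemma mpow_conjDiag (U : unitaryGroup (Fin n) ℂ) (d : Fin n → ℝ) (r : ℝ) :
    mpow (conjDiag U d) r = conjDiag U (fun i => d i ^ r) :=
  matFun_conjDiag _ U d

lemma mexpq_eq_conjDiag {q : ℝ} (hq : q ≠ 1) {A : Matrix (Fin n) (Fin n) ℂ}
    {U : unitaryGroup (Fin n) ℂ} {a : Fin n → ℝ} (ha : 0 ≤ a)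
    (h : (q - 1) • A + 1 = conjDiag U (fun i => a i ^ (q - 1))) :
    mexpq q A = conjDiag U a := by
  have hq' : q - 1 ≠ 0 := sub_ne_zero.2 hq
  have hA : A = conjDiag U (fun i => (q - 1)⁻¹ * a i ^ (q - 1) + -(q - 1)⁻¹) := by
    rw [conjDiag_mul_add, ← h, smul_add, smul_smul, inv_mul_cancel₀ hq', one_smul, neg_smul]
    abel
  rw [mexpq, hA, matFun_conjDiag]
  congr 1
  funext i
  have hlin : (q - 1) * ((q - 1)⁻¹ * a i ^ (q - 1) + -(q - 1)⁻¹) + 1 = a i ^ (q - 1) := by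
    field_simp
    ring
  rw [if_neg hq, hlin, one_div, Real.rpow_rpow_inv (ha i) hq']

lemma rtr_conjDiag (U : unitaryGroup (Fin n) ℂ) (d : Fin n → ℝ) :
    rtr (conjDiag U d) = ∑ i, d i := by
  simp [rtr, trace_conjDiag]

lemma rpow_sub_two_mul_div_le_dlog_sub_dlog {q S T D : ℝ} (hq : 1 < q) (hS : 0 ≤ S) (hT : 0 ≤ T)
    (hD : D ≤ S ^ (2 - q) * T ^ (q - 1)) :
    S ^ (q - 2) * ((D - S) / (q - 1)) ≤ dlog q T - dlog q S := by
  have hSD : S ^ (q - 2) * D ≤ T ^ (q - 1) :=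
    calc S ^ (q - 2) * D ≤ S ^ (q - 2) * (S ^ (2 - q) * T ^ (q - 1)) :=
          mul_le_mul_of_nonneg_left hD (Real.rpow_nonneg hS _)
      _ = (S ^ (2 - q))⁻¹ * S ^ (2 - q) * T ^ (q - 1) := by
          rw [← Real.rpow_neg hS, neg_sub, mul_assoc]
      _ ≤ T ^ (q - 1) := mul_le_of_le_one_left (Real.rpow_nonneg hT _) inv_mul_le_one
  have hSS : S ^ (q - 2) * S = S ^ (q - 1) := by
    rw [← Real.rpow_add_one' hS (by linarith)]
    ring_nf
  rw [dlog, dlog, if_neg hq.ne', if_neg hq.ne']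
  calc S ^ (q - 2) * ((D - S) / (q - 1)) = (S ^ (q - 2) * D - S ^ (q - 1)) / (q - 1) := by
        rw [← hSS]; ring
    _ ≤ (T ^ (q - 1) - S ^ (q - 1)) / (q - 1) := by gcongr
    _ = (T ^ (q - 1) - 1) / (q - 1) - (S ^ (q - 1) - 1) / (q - 1) := by ring

theorem peierls_bogolyubov_ge_general {n : ℕ} (q : ℝ) (hq1 : 1 < q) (hq2 : q ≤ 2)
    (A B : Matrix (Fin n) (Fin n) ℂ)
    (hA' : ((q - 1) • A + 1).PosSemidef) (hAB : ((q - 1) • (A + B) + 1).PosSemidef) :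
    (rtr (mexpq q A)) ^ (q - 2) * rtr (mpow (mexpq q A) (2 - q) * B) ≤
      dlog q (rtr (mexpq q (A + B))) - dlog q (rtr (mexpq q A)) := by
  have hq : q - 1 ≠ 0 := sub_ne_zero.2 hq1.ne'
  obtain ⟨U, a, ha, hX⟩ := hA'.exists_eq_conjDiag_rpow hq
  obtain ⟨W, b, hb, hY⟩ := hAB.exists_eq_conjDiag_rpow hq
  set M := conjDiag U (fun i => a i ^ (2 - q))
  have hMX : M * conjDiag U (fun i => a i ^ (q - 1)) = conjDiag U a := by
    rw [conjDiag_mul_conjDiag]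
    congr 1
    funext i
    rw [Pi.mul_apply, ← Real.rpow_add' (ha i) (by norm_num)]
    norm_num
  have hMB : M * ((q - 1) • B) = M * conjDiag W (fun j => b j ^ (q - 1)) - conjDiag U a := by
    rw [← hMX, ← mul_sub, ← hX, ← hY]
    congr 1
    module
  have hHolder := re_trace_conjDiag_rpow_mul_conjDiag_rpow_le U W ha hb (t := q - 1)
    (by linarith) (by linarith)
  rw [sub_sub_eq_add_sub, show (1 : ℝ) + 1 - q = 2 - q by ring] at hHolder
  rw [mexpq_eq_conjDiag hq1.ne' ha hX, mexpq_eq_conjDiag hq1.ne' hb hY, mpow_conjDiag,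
    rtr_conjDiag, rtr_conjDiag]
  have htr : rtr (M * B) =
      (rtr (M * conjDiag W (fun j => b j ^ (q - 1))) - ∑ i, a i) / (q - 1) := by
    rw [eq_div_iff hq, ← rtr_conjDiag U a]
    simpa [rtr, Matrix.mul_smul, trace_smul, trace_sub, mul_comm] using congrArg rtr hMB
  rw [htr]
  exact rpow_sub_two_mul_div_le_dlog_sub_dlog hq1 (Finset.sum_nonneg fun i _ => ha i)
    (Finset.sum_nonneg fun j _ => hb j) hHolder

theorem peierls_bogolyubov_ge {n : ℕ} (q : ℝ) (hq1 : 1 < q) (hq2 : q ≤ 2)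
    (A B : Matrix (Fin n) (Fin n) ℂ) (hA : A.IsHermitian) (hB : B.IsHermitian)
    (hA' : ((q - 1) • A + 1).PosSemidef) (hAB : ((q - 1) • (A + B) + 1).PosSemidef) :
    (rtr (mexpq q A)) ^ (q - 2) * rtr (mpow (mexpq q A) (2 - q) * B) ≤
      dlog q (rtr (mexpq q (A + B))) - dlog q (rtr (mexpq q A)) :=
  peierls_bogolyubov_ge_general q hq1 hq2 A B hA' hAB
end
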